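/- arXiv:1005.4645 — 3 statements merged into one kernel-verified Lean document; each statement's English description precedes it below -/
import Mathlib

section
/- For the hypertoric data (A, μ), the GIT fans of the torus T acting on T*V, on the extended core E = {(x,y) : x_i y_i = 0 for all i}, and on the moment map fiber μ^{-1}(0) all coincide: Δ(T, T*V) = Δ(T, E) = Δ(T, μ^{-1}(0)). In particular, for every character δ, the semistable locus of T*V is the union over subsets I ⊂ [1,n] of the preimages under the coordinate projections π_I : T*V → E_I of the semistable loci of the components E_I. -/
open MvPolynomial Set
open scoped Classical

variable {d n : ℕ}

/-- The weights of the torus `T = (ℂ*)^d` acting on `T*V = ℂ^n × ℂ^n`: the weight of `x_i` is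
`a i` and that of `y_i` is `-a i` (the weight matrix `A± = [A, -A]`). -/
def cotangentWeight (a : Fin n → Fin d → ℤ) : (Fin n ⊕ Fin n) → (Fin d → ℤ) :=
  Sum.elim a (fun i => -a i)

/-- `δ`-semistability of a point of `T*V` (with respect to semi-invariant polynomials on the
ambient space `T*V`, of weight `N • δ` for some `N > 0`). -/
def IsSemistableT (a : Fin n → Fin d → ℤ) (δ : Fin d → ℚ) (p : Fin n ⊕ Fin n → ℂ) : Prop :=
  ∃ (N : ℕ) (w : Fin d → ℤ) (f : MvPolynomial (Fin n ⊕ Fin n) ℂ),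
    0 < N ∧ (∀ j, (w j : ℚ) = (N : ℚ) * δ j) ∧
      f.IsWeightedHomogeneous (cotangentWeight a) w ∧ MvPolynomial.eval p f ≠ 0

/-- The component `E_I = {(x,y) : x_i = 0 ∀ i ∈ I, y_i = 0 ∀ i ∉ I}` of the extended core. -/
def extCoreComponent (I : Set (Fin n)) : Set (Fin n ⊕ Fin n → ℂ) :=
  {p | (∀ i ∈ I, p (Sum.inl i) = 0) ∧ ∀ i ∉ I, p (Sum.inr i) = 0}

/-- The projection `π_I : T*V → E_I` killing `x_i` for `i ∈ I` and `y_i` for `i ∉ I`. -/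
noncomputable def corePrj (I : Set (Fin n)) (p : Fin n ⊕ Fin n → ℂ) : Fin n ⊕ Fin n → ℂ :=
  Sum.elim (fun i => if i ∈ I then 0 else p (Sum.inl i))
    (fun i => if i ∈ I then p (Sum.inr i) else 0)

/-- The zero fibre `μ^{-1}(0)` of the moment map `μ(x,y)_j = ∑ᵢ a_{ji} x_i y_i`. -/
def momentZero (a : Fin n → Fin d → ℤ) : Set (Fin n ⊕ Fin n → ℂ) :=
  {p | ∀ j : Fin d, ∑ i, (a i j : ℂ) * (p (Sum.inl i) * p (Sum.inr i)) = 0}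

/-- The extended core `E = ⋃_I E_I = {(x,y) : x_i y_i = 0 ∀ i}`. -/
def extCore (n : ℕ) : Set (Fin n ⊕ Fin n → ℂ) := ⋃ I : Set (Fin n), extCoreComponent I

lemma eval_monomial_one' (q : Fin n ⊕ Fin n → ℂ) (m : (Fin n ⊕ Fin n) →₀ ℕ) :
    eval q (monomial m (1:ℂ)) = ∏ s, q s ^ m s := by
  rw [eval_monomial, one_mul, Finsupp.prod_fintype]
  intro s; exact pow_zero _

lemma weight_eq_sum' (w : (Fin n ⊕ Fin n) → Fin d → ℤ) (m : (Fin n ⊕ Fin n) →₀ ℕ) :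
    Finsupp.weight w m = ∑ s, m s • w s := by
  rw [Finsupp.weight_apply, Finsupp.sum_fintype]
  intro s; exact zero_smul _ _

lemma corePrj_mem_extCoreComponent (I : Set (Fin n)) (p : Fin n ⊕ Fin n → ℂ) :
    corePrj I p ∈ extCoreComponent I := by
  constructor <;> intro i hi <;> simp [corePrj, hi]

lemma extCoreComponent_subset_momentZero (a : Fin n → Fin d → ℤ) (I : Set (Fin n)) :
    extCoreComponent I ⊆ momentZero a := by
  intro p hp j
  apply Finset.sum_eq_zero
  intro i _
  by_cases hi : i ∈ I
  · rw [hp.1 i hi]; ring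
  · rw [hp.2 i hi]; ring

lemma semistable_iff_exists (a : Fin n → Fin d → ℤ) (δ : Fin d → ℚ) (p : Fin n ⊕ Fin n → ℂ) :
    IsSemistableT a δ p ↔ ∃ I : Set (Fin n), IsSemistableT a δ (corePrj I p) := by
  constructor
  · rintro ⟨N, w, f, hN, hw, hf, hev⟩
    rw [eval_eq'] at hev
    obtain ⟨m, -, hterm⟩ := Finset.exists_ne_zero_of_sum_ne_zero hev
    have hc : f.coeff m ≠ 0 := fun h => hterm (by simp [h])
    have hprod : ∀ s, p s ^ m s ≠ 0 := fun s =>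
      Finset.prod_ne_zero_iff.mp (fun h => hterm (by rw [h, mul_zero])) s (Finset.mem_univ s)
    set I : Set (Fin n) := {i | m (Sum.inl i) ≤ m (Sum.inr i)} with hI
    set m' : (Fin n ⊕ Fin n) →₀ ℕ := Finsupp.equivFunOnFinite.symm
      (Sum.elim (fun i => m (Sum.inl i) - m (Sum.inr i))
        (fun i => m (Sum.inr i) - m (Sum.inl i))) with hm'
    have hm'l : ∀ i, m' (Sum.inl i) = m (Sum.inl i) - m (Sum.inr i) := fun i => rfl
    have hm'r : ∀ i, m' (Sum.inr i) = m (Sum.inr i) - m (Sum.inl i) := fun i => rfl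
    refine ⟨I, N, w, monomial m' 1, hN, hw, ?_, ?_⟩
    · refine isWeightedHomogeneous_monomial _ _ _ ?_
      have hfw : Finsupp.weight (cotangentWeight a) m = w := hf hc
      rw [← hfw, weight_eq_sum', weight_eq_sum', Fintype.sum_sum_type, Fintype.sum_sum_type]
      funext j
      simp only [Finset.sum_apply, Pi.add_apply, Pi.smul_apply, smul_eq_mul, hm'l, hm'r,
        cotangentWeight, Sum.elim_inl, Sum.elim_inr, Pi.neg_apply]
      rw [← Finset.sum_add_distrib, ← Finset.sum_add_distrib]
      refine Finset.sum_congr rfl fun i _ => ?_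
      have h : ((m (Sum.inl i) - m (Sum.inr i) : ℕ) : ℤ) -
          ((m (Sum.inr i) - m (Sum.inl i) : ℕ) : ℤ)
          = (m (Sum.inl i) : ℤ) - (m (Sum.inr i) : ℤ) := by omega
      linear_combination (a i j) * h
    · rw [eval_monomial_one']
      refine Finset.prod_ne_zero_iff.mpr fun s _ => ?_
      cases s with
      | inl i =>
        by_cases hz : m' (Sum.inl i) = 0
        · rw [hz, pow_zero]; exact one_ne_zero
        · have hz' := hz
          rw [hm'l] at hz'
          have hα : m (Sum.inl i) ≠ 0 := by omega
          have hiI : i ∉ I := by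
            intro hmem
            have : m (Sum.inl i) ≤ m (Sum.inr i) := hmem
            omega
          have hp0 : p (Sum.inl i) ≠ 0 := fun h0 =>
            hprod (Sum.inl i) (by rw [h0, zero_pow hα])
          simpa [corePrj, hiI] using pow_ne_zero _ hp0
      | inr i =>
        by_cases hz : m' (Sum.inr i) = 0
        · rw [hz, pow_zero]; exact one_ne_zero
        · have hz' := hz
          rw [hm'r] at hz'
          have hβ : m (Sum.inr i) ≠ 0 := by omega
          have hiI : i ∈ I := show m (Sum.inl i) ≤ m (Sum.inr i) by omega
          have hp0 : p (Sum.inr i) ≠ 0 := fun h0 =>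
            hprod (Sum.inr i) (by rw [h0, zero_pow hβ])
          simpa [corePrj, hiI] using pow_ne_zero _ hp0
  · rintro ⟨I, N, w, f, hN, hw, hf, hev⟩
    rw [eval_eq'] at hev
    obtain ⟨m, -, hterm⟩ := Finset.exists_ne_zero_of_sum_ne_zero hev
    have hc : f.coeff m ≠ 0 := fun h => hterm (by simp [h])
    have hprod : ∀ s, (corePrj I p) s ^ m s ≠ 0 := fun s =>
      Finset.prod_ne_zero_iff.mp (fun h => hterm (by rw [h, mul_zero])) s (Finset.mem_univ s)
    refine ⟨N, w, monomial m 1, hN, hw,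
      isWeightedHomogeneous_monomial _ _ _ (hf hc), ?_⟩
    rw [eval_monomial_one']
    have : ∀ s, p s ^ m s = (corePrj I p) s ^ m s := by
      intro s
      by_cases hz : m s = 0
      · rw [hz, pow_zero, pow_zero]
      · have hne : corePrj I p s ≠ 0 := fun h => hprod s (by rw [h, zero_pow hz])
        congr 1
        cases s with
        | inl i =>
          by_cases hi : i ∈ I
          · exact absurd (by simp [corePrj, hi]) hne
          · simp [corePrj, hi]
        | inr i =>
          by_cases hi : i ∈ I
          · simp [corePrj, hi]
          · exact absurd (by simp [corePrj, hi]) hne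
    rw [Finset.prod_congr rfl fun s _ => this s]
    exact Finset.prod_ne_zero_iff.mpr fun s _ => hprod s

lemma semistable_eq_of_inter (a : Fin n → Fin d → ℤ) (Z : Set (Fin n ⊕ Fin n → ℂ))
    (hZ : ∀ (I : Set (Fin n)) (p : Fin n ⊕ Fin n → ℂ), corePrj I p ∈ Z) {δ₁ δ₂ : Fin d → ℚ}
    (h : Z ∩ {p | IsSemistableT a δ₁ p} = Z ∩ {p | IsSemistableT a δ₂ p}) :
    {p | IsSemistableT a δ₁ p} = {p | IsSemistableT a δ₂ p} := by
  have key : ∀ δ₁ δ₂ : Fin d → ℚ,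
      Z ∩ {p | IsSemistableT a δ₁ p} ⊆ Z ∩ {p | IsSemistableT a δ₂ p} →
      {p | IsSemistableT a δ₁ p} ⊆ {p | IsSemistableT a δ₂ p} := by
    intro δ₁ δ₂ hsub p hp
    obtain ⟨I, hI⟩ := (semistable_iff_exists a δ₁ p).mp hp
    have : corePrj I p ∈ Z ∩ {p | IsSemistableT a δ₂ p} := hsub ⟨hZ I p, hI⟩
    exact (semistable_iff_exists a δ₂ p).mpr ⟨I, this.2⟩
  exact le_antisymm (key δ₁ δ₂ h.le) (key δ₂ δ₁ h.ge)

/-- For the hypertoric data `(A, μ)` the GIT fans of `T` acting on `T*V`, on the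
extended core `E` and on `μ^{-1}(0)` coincide: for every fractional character `δ` the semistable
locus of `T*V` is the union over subsets `I ⊆ [1,n]` of the preimages under `π_I` of the
semistable loci of the components `E_I`, likewise for `μ^{-1}(0)`, and consequently two
characters have the same semistable locus on `T*V` iff they do on `E` iff they do on
`μ^{-1}(0)`. -/
theorem stmt8 (d n : ℕ) (a : Fin n → Fin d → ℤ) :
    (∀ δ : Fin d → ℚ,
      {p | IsSemistableT a δ p} =
        ⋃ I : Set (Fin n), corePrj I ⁻¹' (extCoreComponent I ∩ {p | IsSemistableT a δ p})) ∧
    (∀ δ : Fin d → ℚ,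
      momentZero a ∩ {p | IsSemistableT a δ p} =
        ⋃ I : Set (Fin n),
          momentZero a ∩
            corePrj I ⁻¹' (extCoreComponent I ∩ {p | IsSemistableT a δ p})) ∧
    (∀ δ₁ δ₂ : Fin d → ℚ,
      (({p | IsSemistableT a δ₁ p} = {p | IsSemistableT a δ₂ p}) ↔
        (extCore n ∩ {p | IsSemistableT a δ₁ p} = extCore n ∩ {p | IsSemistableT a δ₂ p})) ∧
      (({p | IsSemistableT a δ₁ p} = {p | IsSemistableT a δ₂ p}) ↔
        (momentZero a ∩ {p | IsSemistableT a δ₁ p} =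
          momentZero a ∩ {p | IsSemistableT a δ₂ p}))) := by
  have h1 : ∀ δ : Fin d → ℚ,
      {p | IsSemistableT a δ p} =
        ⋃ I : Set (Fin n), corePrj I ⁻¹' (extCoreComponent I ∩ {p | IsSemistableT a δ p}) := by
    intro δ
    ext p
    simp only [mem_setOf_eq, mem_iUnion, mem_preimage, mem_inter_iff]
    rw [semistable_iff_exists]
    exact exists_congr fun I => (and_iff_right (corePrj_mem_extCoreComponent I p)).symm
  refine ⟨h1, fun δ => by conv_lhs => rw [h1 δ, inter_iUnion], fun δ₁ δ₂ => ⟨⟨?_, ?_⟩, ⟨?_, ?_⟩⟩⟩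
  · intro h; rw [h]
  · exact fun h => semistable_eq_of_inter a (extCore n)
      (fun I p => mem_iUnion.mpr ⟨I, corePrj_mem_extCoreComponent I p⟩) h
  · intro h; rw [h]
  · exact fun h => semistable_eq_of_inter a (momentZero a)
      (fun I p => extCoreComponent_subset_momentZero a I (corePrj_mem_extCoreComponent I p)) h
end

section
/- In the rational Cherednik algebra H_h(ℤ_m), the commutation identity [y, x^j] = x^{j−1}( j + m ∑_{i=0}^{m−1} (h_{i+j} − h_i) e_i ) holds for all j ≥ 0, where indices of h are taken modulo m. -/
open Finset

/-- The idempotent `e_i = (1/m) ∑_{j=0}^{m-1} ζ^{-ij} ε^j` attached to the `i`-th character of the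
cyclic group `ℤ/m` generated by `ε` inside a `ℂ`-algebra. -/
noncomputable def cyclicIdempotent {B : Type*} [Ring B] [Algebra ℂ B] (m : ℕ) (ζ : ℂ) (ε : B)
    (i : ZMod m) : B :=
  (m : ℂ)⁻¹ • ∑ j ∈ Finset.range m, (ζ ^ ((i.val * j) % m))⁻¹ • ε ^ j

section aux
variable {H : Type*} [Ring H] [Algebra ℂ H]

lemma aux_pow_congr (m : ℕ) [NeZero m] (ζ : ℂ) (hζ : IsPrimitiveRoot ζ m)
    {a b : ℕ} (hab : (a : ZMod m) = b) : ζ ^ a = ζ ^ b := by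
  have h1 : a % m = b % m := (ZMod.natCast_eq_natCast_iff a b m).mp hab
  rw [← pow_mod_orderOf (n := a), ← pow_mod_orderOf (n := b), ← hζ.eq_orderOf, h1]

lemma aux_eps_pow_x (ζ : ℂ) (x ε : H) (hεx : ε * x = ζ • (x * ε)) (j : ℕ) :
    ε ^ j * x = (ζ ^ j) • (x * ε ^ j) := by
  induction j with
  | zero => simp
  | succ n ih =>
    rw [pow_succ, mul_assoc, hεx, mul_smul_comm, ← mul_assoc, ih, smul_mul_assoc,
      smul_smul, pow_succ, mul_assoc, mul_comm (ζ ^ n)]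

lemma aux_idem_x (m : ℕ) [NeZero m] (ζ : ℂ) (hζ : IsPrimitiveRoot ζ m) (x ε : H)
    (hεx : ε * x = ζ • (x * ε)) (i : ZMod m) :
    cyclicIdempotent m ζ ε i * x = x * cyclicIdempotent m ζ ε (i - 1) := by
  have hζ0 : ζ ≠ 0 := hζ.ne_zero (NeZero.ne m)
  unfold cyclicIdempotent
  rw [smul_mul_assoc, mul_smul_comm, sum_mul, mul_sum]
  congr 1
  refine sum_congr rfl fun j _ => ?_
  rw [smul_mul_assoc, aux_eps_pow_x ζ x ε hεx, smul_smul, mul_smul_comm]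
  congr 1
  have key : ζ ^ (i.val * j % m) = ζ ^ j * ζ ^ ((i - 1).val * j % m) := by
    rw [← pow_add]
    refine aux_pow_congr m ζ hζ ?_
    push_cast [ZMod.natCast_mod, ZMod.natCast_val, ZMod.cast_id]
    ring
  rw [key, mul_inv]
  field_simp
end aux

lemma aux_sum_shift {H : Type*} [Ring H] [Algebra ℂ H] (m : ℕ) [NeZero m] (ζ : ℂ)
    (hζ : IsPrimitiveRoot ζ m) (x ε : H) (hεx : ε * x = ζ • (x * ε)) (c : ZMod m → ℂ) :
    (∑ i : ZMod m, c i • cyclicIdempotent m ζ ε i) * x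
      = x * ∑ i : ZMod m, c (i + 1) • cyclicIdempotent m ζ ε i := by
  rw [sum_mul, mul_sum]
  have h1 : ∀ i : ZMod m, c i • cyclicIdempotent m ζ ε i * x
      = c i • (x * cyclicIdempotent m ζ ε (i - 1)) := fun i => by
    rw [smul_mul_assoc, aux_idem_x m ζ hζ x ε hεx]
  simp only [h1]
  exact (Fintype.sum_equiv (Equiv.addRight (1 : ZMod m))
    (fun i => x * c (i + 1) • cyclicIdempotent m ζ ε i)
    (fun i => c i • (x * cyclicIdempotent m ζ ε (i - 1)))
    (fun i => by simp [mul_smul_comm])).symm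


/-- In the rational Cherednik algebra `H_h(ℤ_m)` — modelled by any `ℂ`-algebra
containing elements `x, y, ε` satisfying the defining relations `ε^m = 1`, `ε x = ζ (x ε)`,
`ε y = ζ⁻¹ (y ε)` and `[y,x] = 1 + m ∑_{i} (h_{i+1} - h_i) e_i` — the commutation identity
`[y, x^j] = x^{j-1} ( j + m ∑_{i=0}^{m-1} (h_{i+j} - h_i) e_i )` holds for all `j ≥ 0`, where
indices of `h` are taken modulo `m`.  (For `j = 0` both sides vanish; `j - 1` is truncated
subtraction.) -/
theorem stmt11 (m : ℕ) [NeZero m] (ζ : ℂ) (hζ : IsPrimitiveRoot ζ m) (h : ZMod m → ℂ)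
    (H : Type*) [Ring H] [Algebra ℂ H] (x y ε : H)
    (hεm : ε ^ m = 1)
    (hεx : ε * x = ζ • (x * ε))
    (hεy : ε * y = ζ⁻¹ • (y * ε))
    (hyx : y * x - x * y =
      1 + (m : ℂ) • ∑ i : ZMod m, (h (i + 1) - h i) • cyclicIdempotent m ζ ε i) :
    ∀ j : ℕ, y * x ^ j - x ^ j * y =
      x ^ (j - 1) * ((j : ℂ) • (1 : H) +
        (m : ℂ) • ∑ i : ZMod m, (h (i + (j : ZMod m)) - h i) • cyclicIdempotent m ζ ε i) := by
  set E := cyclicIdempotent m ζ ε with hE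
  intro j
  induction j with
  | zero => simp
  | succ j ih =>
    have step : y * x ^ (j+1) - x ^ (j+1) * y
        = (y * x ^ j - x ^ j * y) * x + x ^ j * (y * x - x * y) := by
      rw [pow_succ]; noncomm_ring
    rw [step, ih, hyx]
    rcases Nat.eq_zero_or_pos j with rfl | hj
    · simp
    · have key : ((j:ℂ) • (1:H) + (m:ℂ) • ∑ i : ZMod m, (h (i + (j : ZMod m)) - h i) • E i) * x
          = x * ((j:ℂ) • (1:H)
            + (m:ℂ) • ∑ i : ZMod m, (h (i + 1 + (j : ZMod m)) - h (i + 1)) • E i) := by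
        rw [add_mul, mul_add, smul_mul_assoc, one_mul, mul_smul_comm, mul_smul_comm, mul_one,
          smul_mul_assoc, aux_sum_shift m ζ hζ x ε hεx]
      rw [mul_assoc, key, ← mul_assoc, ← pow_succ, Nat.sub_add_cancel hj, ← mul_add,
        Nat.add_sub_cancel]
      congr 1
      have hsum : ∀ i : ZMod m, h (i + ((j:ZMod m) + 1)) - h i
          = (h (i + 1 + (j:ZMod m)) - h (i + 1)) + (h (i + 1) - h i) := fun i => by
        rw [add_assoc, add_comm 1 (j : ZMod m)]; ring
      push_cast
      simp only [hsum, add_smul, sum_add_distrib, smul_add]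
      module
end

section
/- The Dunkl operator identity: in D(ℂ*) ⋊ ℤ_m, setting Θ_h(y) = d/dx + (m/x)∑_{i=0}^{m−1} h_i e_i and e = e_0 the trivial idempotent, the m-th power satisfies Θ_h(y^m e)(x^r) = ∏_{i=1}^{m} (r − m + i + m h_i) · x^{r−m} for all r ∈ ℤ with r ≡ 0 mod m (acting on ℤ_m-invariant monomials). -/
open LaurentPolynomial

noncomputable section

/-- The derivative `d/dx` on Laurent polynomials `ℂ[x, x⁻¹]`, sending `x^k ↦ k x^{k-1}`. -/
def lderiv (f : LaurentPolynomial ℂ) : LaurentPolynomial ℂ :=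
  Finsupp.sum f.coeff fun k a => ((k : ℂ) * a) • LaurentPolynomial.T (k - 1)

/-- The Dunkl-type operator `d/dx + (m c)/x` acting on Laurent polynomials. -/
def dunklFactor (m : ℕ) (c : ℂ) (f : LaurentPolynomial ℂ) : LaurentPolynomial ℂ :=
  lderiv f + ((m : ℂ) * c) • (LaurentPolynomial.T (-1) * f)

/-- `Θ_h(y^m e) = (d/dx + (m/x) h_1) ∘ (d/dx + (m/x) h_2) ∘ ⋯ ∘ (d/dx + (m/x) h_m)`,
the product `∏_{i=1}^m (d/dx + (m/x) h_i)` composed in decreasing order of `i` (the factor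
`i = m` acting first). -/
def dunklPower (m : ℕ) (h : ℕ → ℂ) : LaurentPolynomial ℂ → LaurentPolynomial ℂ :=
  (List.range m).foldr (fun k acc => fun f => dunklFactor m (h (k + 1)) (acc f)) id

lemma coeff_smul_T {R : Type*} [Semiring R] (a : R) (k : ℤ) :
    (a • T k : LaurentPolynomial R).coeff = Finsupp.single k a := by
  ext n
  simp [Finsupp.single_apply]

lemma lderiv_smul_T (a : ℂ) (k : ℤ) :
    lderiv (a • T k) = ((k : ℂ) * a) • T (k - 1) := by
  rw [lderiv, coeff_smul_T, Finsupp.sum_single_index]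
  simp

lemma dunklFactor_smul_T (m : ℕ) (c a : ℂ) (k : ℤ) :
    dunklFactor m c (a • T k) = (a * ((k : ℂ) + m * c)) • T (k - 1) := by
  rw [dunklFactor, lderiv_smul_T, mul_smul_comm, ← T_add, neg_add_eq_sub, smul_smul, ← add_smul]
  ring_nf

lemma List.foldr_comp_eq_comp {α β : Type*} (g : α → β → β) (l : List α) (A : β → β) :
    l.foldr (fun k acc => g k ∘ acc) A = l.foldr (fun k acc => g k ∘ acc) id ∘ A := by
  induction l with
  | nil => rfl
  | cons a l ih => simp only [List.foldr_cons, ih, Function.comp_assoc]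

/-- The composite `(d/dx + (m/x) h_1) ∘ ⋯ ∘ (d/dx + (m/x) h_n)` of the first `n` factors of
`dunklPower m h`. -/
def dunklPartialPower (m : ℕ) (h : ℕ → ℂ) (n : ℕ) : LaurentPolynomial ℂ → LaurentPolynomial ℂ :=
  (List.range n).foldr (fun k acc => dunklFactor m (h (k + 1)) ∘ acc) id

lemma dunklPower_eq_dunklPartialPower (m : ℕ) (h : ℕ → ℂ) :
    dunklPower m h = dunklPartialPower m h m :=
  rfl

lemma dunklPartialPower_succ (m : ℕ) (h : ℕ → ℂ) (n : ℕ) (f : LaurentPolynomial ℂ) :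
    dunklPartialPower m h (n + 1) f =
      dunklPartialPower m h n (dunklFactor m (h (n + 1)) f) := by
  rw [dunklPartialPower, List.range_succ, List.foldr_append, List.foldr_comp_eq_comp]
  rfl

lemma dunklPartialPower_smul_T (m : ℕ) (h : ℕ → ℂ) (n : ℕ) (a : ℂ) (k : ℤ) :
    dunklPartialPower m h n (a • T k) =
      (a * ∏ i ∈ Finset.range n, ((k : ℂ) - n + (i + 1) + m * h (i + 1))) • T (k - n) := by
  induction n generalizing a k with
  | zero => simp [dunklPartialPower]
  | succ n ih =>
    rw [dunklPartialPower_succ, dunklFactor_smul_T, ih, Finset.prod_range_succ]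
    have shifted : ∀ i ∈ Finset.range n,
        (((k - 1 : ℤ) : ℂ) - n + (i + 1) + m * h (i + 1)) =
          (k : ℂ) - (n + 1 : ℕ) + (i + 1) + m * h (i + 1) := by
      intro i _
      push_cast
      ring
    rw [Finset.prod_congr rfl shifted]
    congr 1
    · push_cast
      ring
    · congr 1
      push_cast
      ring

theorem stmt14_general (m : ℕ) (h : ℕ → ℂ) (r : ℤ) :
    dunklPower m h (LaurentPolynomial.T r) =
      (∏ i ∈ Finset.range m, ((r : ℂ) - (m : ℂ) + ((i : ℂ) + 1) + (m : ℂ) * h (i + 1))) •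
        LaurentPolynomial.T (r - (m : ℤ)) := by
  rw [dunklPower_eq_dunklPartialPower]
  simpa using dunklPartialPower_smul_T m h m 1 r

/-- **Dunkl operator identity.** In `D(ℂ*) ⋊ ℤ_m`, with
`Θ_h(y) = d/dx + (m/x) ∑ h_i e_i` and `e = e_0` the trivial idempotent, the operator
`Θ_h(y^m e) = ∏_{i=1}^m (d/dx + (m/x) h_i)` satisfies
`Θ_h(y^m e)(x^r) = ∏_{i=1}^m (r − m + i + m h_i) · x^{r−m}` for every `r ∈ ℤ` with
`r ≡ 0 (mod m)` (acting on `ℤ_m`-invariant monomials). -/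
theorem stmt14 (m : ℕ) (h : ℕ → ℂ) (r : ℤ) (hr : (m : ℤ) ∣ r) :
    dunklPower m h (LaurentPolynomial.T r) =
      (∏ i ∈ Finset.range m, ((r : ℂ) - (m : ℂ) + ((i : ℂ) + 1) + (m : ℂ) * h (i + 1))) •
        LaurentPolynomial.T (r - (m : ℤ)) :=
  stmt14_general m h r

end
end
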